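/- arXiv:1201.6003 — 11 statements merged into one kernel-verified Lean document; each statement's English description precedes it below -/
import Mathlib

section
/- Let M be an N×N Hermitian positive semidefinite matrix over ℂ. Then the matrix E with entries E i j = Complex.exp (M i j) (the entrywise exponential of M) is positive semidefinite, i.e. for every vector c ∈ ℂ^N one has 0 ≤ Σ_{i,j} conj(c i) · (c j) · Complex.exp (M i j) (the sum is a nonnegative real). -/
open scoped ComplexConjugate ComplexOrder
open Matrix in

/-- **Schur-product step.** If `M` is an `N × N` Hermitian positive semidefinite
matrix over `ℂ`, then its entrywise exponential is positive semidefinite: for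
every vector `c : Fin N → ℂ`, the quadratic form
`∑ i j, conj (c i) * c j * exp (M i j)` is a nonnegative real. -/
theorem entrywise_exp_posSemidef {N : ℕ} (M : Matrix (Fin N) (Fin N) ℂ)
    (hM : M.PosSemidef) (c : Fin N → ℂ) :
    0 ≤ ∑ i, ∑ j, conj (c i) * c j * Complex.exp (M i j) := by
  obtain ⟨B, rfl⟩ : ∃ B : Matrix (Fin N) (Fin N) ℂ, M = Bᴴ * B := by
    open scoped MatrixOrder Matrix.Norms.L2Operator in
    exact CStarAlgebra.nonneg_iff_eq_star_mul_self.mp hM.nonneg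
  -- rewrite exp as its power series
  have hexp : ∀ z : ℂ, Complex.exp z = ∑' n : ℕ, z ^ n / n.factorial := by
    intro z
    rw [Complex.exp_eq_exp_ℂ, NormedSpace.exp_eq_tsum_div]
  have hsum : ∀ z : ℂ, Summable (fun n : ℕ => z ^ n / n.factorial) :=
    fun z => (NormedSpace.expSeries_div_summable (𝔸 := ℂ) z)
  calc 0 ≤ ∑' n : ℕ, ∑ i, ∑ j,
        conj (c i) * c j * ((Bᴴ * B) i j ^ n / n.factorial) := ?_
    _ = ∑ i, ∑ j, conj (c i) * c j * Complex.exp ((Bᴴ * B) i j) := ?_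
  · apply tsum_nonneg
    intro n
    have key : ∀ i j, (Bᴴ * B) i j ^ n
        = ∑ p : Fin n → Fin N, conj (∏ t, B (p t) i) * ∏ t, B (p t) j := by
      intro i j
      have h1 : (Bᴴ * B) i j = ∑ k, conj (B k i) * B k j := by
        simp [Matrix.mul_apply, Matrix.conjTranspose_apply]
      rw [h1, Fintype.sum_pow]
      exact Finset.sum_congr rfl fun p _ => by
        rw [Finset.prod_mul_distrib, map_prod]
    have expand : ∑ i, ∑ j, conj (c i) * c j * ((Bᴴ * B) i j ^ n / n.factorial)
        = (n.factorial : ℂ)⁻¹ * ∑ p : Fin n → Fin N,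
            conj (∑ i, c i * ∏ t, B (p t) i) * ∑ j, c j * ∏ t, B (p t) j := by
      simp_rw [key, div_eq_mul_inv, map_sum, Finset.sum_mul, Finset.mul_sum, _root_.map_mul]
      rw [Finset.sum_congr rfl fun i _ => Finset.sum_comm .., Finset.sum_comm]
      refine Finset.sum_congr rfl fun p _ => ?_
      refine Finset.sum_congr rfl fun i _ => ?_
      refine Finset.sum_congr rfl fun j _ => ?_
      ring
    rw [expand]
    refine mul_nonneg ?_ (Finset.sum_nonneg fun p _ => ?_)
    · rw [show ((n.factorial : ℂ))⁻¹ = (((n.factorial : ℝ)⁻¹ : ℝ) : ℂ) by push_cast; ring]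
      exact Complex.zero_le_real.mpr (by positivity)
    · exact star_mul_self_nonneg _
  · rw [Summable.tsum_finsetSum fun i _ => ?_]
    · refine Finset.sum_congr rfl fun i _ => ?_
      rw [Summable.tsum_finsetSum fun j _ => ?_]
      · refine Finset.sum_congr rfl fun j _ => ?_
        rw [hexp, ← tsum_mul_left]
      · exact (hsum _).mul_left _
    · exact summable_sum fun j _ => (hsum _).mul_left _
end

section
/- Let H be a complex Hilbert space, J a conjugation on H, and π a self-adjoint unitary involution on H commuting with J. Let D be a bounded linear operator on H satisfying D = Dᵀ (symmetry, where Dᵀ = J ∘ D* ∘ J) and π ∘ D ∘ π = D*. For any finite family f_1, …, f_N ∈ H and c_1, …, c_N ∈ ℂ, setting d_j := c_j · Complex.exp(−(1/2)·⟪J f_j, D f_j⟫), one has the identity Σ_{j,j'} conj(c_j) · c_{j'} · Complex.exp(−(1/2)·⟪J(f_{j'} − π(J f_j)), D(f_{j'} − π(J f_j))⟫) = Σ_{j,j'} conj(d_j) · d_{j'} · Complex.exp(⟪f_j, π(D f_{j'})⟫). -/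
open ContinuousLinearMap
open scoped ComplexConjugate ComplexOrder

/-- **Gaussian reflection-positivity identity.** Let `H` be a complex Hilbert
space, `J` a conjugation on `H`, `π` a self-adjoint unitary involution
commuting with `J`, and `D` a bounded operator with `D = Dᵀ = J ∘ D* ∘ J` and
`π ∘ D ∘ π = D*`.  With `d j = c j • exp (-(1/2) ⟪J f_j, D f_j⟫)` one has
`∑ conj (c j) c j' exp (-(1/2) ⟪J (f j' - π (J f j)), D (f j' - π (J f j))⟫)
  = ∑ conj (d j) d j' exp ⟪f j, π (D f j')⟫`. -/
theorem gaussian_reflection_positivity_identity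
    {H : Type*} [NormedAddCommGroup H] [InnerProductSpace ℂ H] [CompleteSpace H]
    (J : H → H)
    (hJadd : ∀ x y, J (x + y) = J x + J y)
    (hJsmul : ∀ (a : ℂ) (x : H), J (a • x) = (conj a) • J x)
    (hJinv : ∀ x, J (J x) = x)
    (hJinner : ∀ x y, (inner ℂ (J x) (J y) : ℂ) = conj (inner ℂ x y : ℂ))
    (π : H →L[ℂ] H) (hπsa : IsSelfAdjoint π) (hπinv : π ∘L π = 1)
    (hπJ : ∀ x, π (J x) = J (π x))
    (D : H →L[ℂ] H)
    (hDsymm : ∀ x, D x = J (adjoint D (J x)))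
    (hDrefl : ∀ x, π (D (π x)) = adjoint D x)
    (N : ℕ) (f : Fin N → H) (c : Fin N → ℂ) (d : Fin N → ℂ)
    (hd : ∀ j, d j = c j * Complex.exp (-(1/2 : ℂ) * (inner ℂ (J (f j)) (D (f j)) : ℂ))) :
    ∑ j, ∑ j', conj (c j) * c j' *
        Complex.exp (-(1/2 : ℂ) *
          (inner ℂ (J (f j' - π (J (f j)))) (D (f j' - π (J (f j)))) : ℂ))
      = ∑ j, ∑ j', conj (d j) * d j' *
          Complex.exp (inner ℂ (f j) (π (D (f j'))) : ℂ) := by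
  -- basic consequences
  have hππ : ∀ x, π (π x) = x := by
    intro x
    have := congrArg (fun T : H →L[ℂ] H => T x) hπinv
    simpa using this
  have hJsub : ∀ x y, J (x - y) = J x - J y := by
    intro x y
    have h1 : J (-y) = - J y := by
      have := hJsmul (-1 : ℂ) y
      simpa using this
    rw [sub_eq_add_neg, hJadd, h1, sub_eq_add_neg]
  have hπJ' : ∀ x, J (π (J x)) = π x := by
    intro x; rw [hπJ, hJinv]
  have hDadjπ : ∀ x, adjoint D (π x) = π (D x) := by
    intro x
    have := hDrefl (π x)
    rw [hππ] at this
    exact this.symm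
  have hDπJ : ∀ x, D (π (J x)) = J (π (D x)) := by
    intro x
    rw [hDsymm (π (J x)), hπJ', hDadjπ]
  have hπ_inner : ∀ x y : H, (inner ℂ (π x) y : ℂ) = inner ℂ x (π y) := by
    intro x y
    have h : adjoint π = π := hπsa
    rw [← adjoint_inner_left, h]
  apply Finset.sum_congr rfl
  intro j _
  apply Finset.sum_congr rfl
  intro j' _
  set a := f j with ha
  set b := f j' with hb
  set A : ℂ := inner ℂ (J a) (D a) with hA
  set B : ℂ := inner ℂ (J b) (D b) with hB
  set T : ℂ := inner ℂ a (π (D b)) with hT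
  -- the four terms
  have t2 : (inner ℂ (J b) (J (π (D a))) : ℂ) = T := by
    rw [hJinner, inner_conj_symm, hπ_inner, ← adjoint_inner_right, hDadjπ, ← hT]
  have t3 : (inner ℂ (π a) (D b) : ℂ) = T := by
    rw [hπ_inner, hT]
  have t4 : (inner ℂ (π a) (J (π (D a))) : ℂ) = conj A := by
    conv_lhs => rw [← hπJ' a]
    rw [hJinner, hπ_inner, hππ, hA]
  have key : (inner ℂ (J (b - π (J a))) (D (b - π (J a))) : ℂ)
      = B - 2 * T + conj A := by
    rw [hJsub, hπJ', map_sub, hDπJ, inner_sub_left, inner_sub_right, inner_sub_right,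
      t2, t3, t4, ← hB]
    ring
  rw [key, hd, hd, ← ha, ← hb, ← hA, ← hB]
  have hc : conj (-(1/2 : ℂ) * A) = -(1/2 : ℂ) * conj A := by
    have h2 : conj (-(1/2 : ℂ)) = -(1/2 : ℂ) := by
      simp [map_div₀, Complex.conj_ofNat]
    rw [map_mul, h2]
  have hrhs : conj (c j * Complex.exp (-(1/2 : ℂ) * A)) *
        (c j' * Complex.exp (-(1/2 : ℂ) * B)) * Complex.exp T
      = conj (c j) * c j' *
        (Complex.exp (-(1/2 : ℂ) * conj A) * Complex.exp (-(1/2 : ℂ) * B) *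
          Complex.exp T) := by
    rw [map_mul, ← Complex.exp_conj, hc]
    ring
  rw [hrhs, ← Complex.exp_add, ← Complex.exp_add]
  congr 1
  ring
end

section
/- Let H be a complex Hilbert space, J a conjugation on H, and π a self-adjoint unitary involution on H commuting with J. Let D be a bounded linear operator on H satisfying π ∘ D ∘ π = D*. Then the Gaussian characteristic functional S(f) := Complex.exp(−(1/2)·⟪J f, D f⟫) satisfies S(f) = conj(S(−π(J f))) for every f ∈ H. -/
open ContinuousLinearMap
open scoped ComplexConjugate

/-- If `J` is a conjugation on a complex Hilbert space `H`, `π` a self-adjoint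
unitary involution commuting with `J`, and `D` a bounded operator with
`π ∘ D ∘ π = D*`, then the Gaussian characteristic functional
`S f = exp (-(1/2) ⟪J f, D f⟫)` satisfies `S f = conj (S (-π (J f)))`. -/
theorem gaussian_characteristic_functional_reflection_symmetry
    {H : Type*} [NormedAddCommGroup H] [InnerProductSpace ℂ H] [CompleteSpace H]
    (J : H → H)
    (hJadd : ∀ x y, J (x + y) = J x + J y)
    (hJsmul : ∀ (a : ℂ) (x : H), J (a • x) = (conj a) • J x)
    (hJinv : ∀ x, J (J x) = x)
    (hJinner : ∀ x y, (inner ℂ (J x) (J y) : ℂ) = conj (inner ℂ x y : ℂ))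
    (π : H →L[ℂ] H) (hπsa : IsSelfAdjoint π) (hπinv : π ∘L π = 1)
    (hπJ : ∀ x, π (J x) = J (π x))
    (D : H →L[ℂ] H)
    (hDrefl : ∀ x, π (D (π x)) = adjoint D x)
    (S : H → ℂ)
    (hS : ∀ g, S g = Complex.exp (-(1/2 : ℂ) * (inner ℂ (J g) (D g) : ℂ)))
    (f : H) :
    S f = conj (S (-(π (J f)))) := by
  have hJneg : ∀ x : H, J (-x) = -(J x) := fun x => by
    have h := hJsmul (-1) x
    simpa using h
  have key : J (-(π (J f))) = -(π f) := by
    rw [hJneg, ← hπJ, hJinv]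
  rw [hS, hS, key]
  have h1 : (inner ℂ (-(π f)) (D (-(π (J f)))) : ℂ) = inner ℂ (π f) (D (π (J f))) := by
    rw [map_neg, inner_neg_neg]
  rw [h1]
  have h2 : (inner ℂ (π f) (D (π (J f))) : ℂ) = inner ℂ f (π (D (π (J f)))) := by
    have := adjoint_inner_left π (D (π (J f))) f
    rwa [hπsa.adjoint_eq] at this
  rw [h2, hDrefl, adjoint_inner_right, ← Complex.exp_conj]
  congr 1
  rw [map_mul, inner_conj_symm]
  simp
  left
  exact (Complex.conj_ofNat 2).symm
end

section
/- Let H be a complex Hilbert space, J a conjugation on H, and π a self-adjoint unitary involution on H commuting with J. Let D be a bounded linear operator on H satisfying π ∘ D ∘ π = D*, and set S(f) := Complex.exp(−(1/2)·⟪J f, D f⟫). Then for any f_1, …, f_N ∈ H the N×N matrix M with entries M j j' = S(f_{j'} − π(J f_j)) is Hermitian: M j j' = conj(M j' j) for all j, j'. -/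
open ContinuousLinearMap
open scoped ComplexConjugate

/-- The Osterwalder–Schrader matrix `M j j' = S (f j' - π (J f j))` of the
Gaussian characteristic functional `S g = exp (-(1/2) ⟪J g, D g⟫)` is
Hermitian, provided `π ∘ D ∘ π = D*`. -/
theorem gaussian_os_matrix_hermitian
    {H : Type*} [NormedAddCommGroup H] [InnerProductSpace ℂ H] [CompleteSpace H]
    (J : H → H)
    (hJadd : ∀ x y, J (x + y) = J x + J y)
    (hJsmul : ∀ (a : ℂ) (x : H), J (a • x) = (conj a) • J x)
    (hJinv : ∀ x, J (J x) = x)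
    (hJinner : ∀ x y, (inner ℂ (J x) (J y) : ℂ) = conj (inner ℂ x y : ℂ))
    (π : H →L[ℂ] H) (hπsa : IsSelfAdjoint π) (hπinv : π ∘L π = 1)
    (hπJ : ∀ x, π (J x) = J (π x))
    (D : H →L[ℂ] H)
    (hDrefl : ∀ x, π (D (π x)) = adjoint D x)
    (S : H → ℂ)
    (hS : ∀ g, S g = Complex.exp (-(1/2 : ℂ) * (inner ℂ (J g) (D g) : ℂ)))
    (N : ℕ) (f : Fin N → H)
    (M : Matrix (Fin N) (Fin N) ℂ)
    (hM : ∀ j j', M j j' = S (f j' - π (J (f j)))) :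
    ∀ j j', M j j' = conj (M j' j) := by
  -- auxiliary facts about J
  have hJneg : ∀ x : H, J (-x) = - J x := by
    intro x
    have h := hJsmul (-1) x
    simpa using h
  have hJsub : ∀ x y : H, J (x - y) = J x - J y := by
    intro x y
    rw [sub_eq_add_neg, hJadd, hJneg, sub_eq_add_neg]
  have hππ : ∀ x : H, π (π x) = x := by
    intro x
    have h := DFunLike.congr_fun hπinv x
    simpa using h
  have hJπJ : ∀ x : H, J (π (J x)) = π x := by
    intro x
    rw [hπJ, hJinv]
  intro j j'
  set a := f j with ha
  set b := f j' with hb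
  set g' : H := a - π (J b) with hg'
  have hJg' : J g' = J a - π b := by
    rw [hg', hJsub, hJπJ]
  -- identities relating g and g'
  have h2 : b - π (J a) = -(π (J g')) := by
    rw [hJg', map_sub, hππ]
    abel
  have h1 : J (b - π (J a)) = -(π g') := by
    rw [hJsub, hJπJ, hg', map_sub, hππ]
    abel
  -- the key inner product identity
  have key : (inner ℂ (J (b - π (J a))) (D (b - π (J a))) : ℂ)
      = conj (inner ℂ (J g') (D g') : ℂ) := by
    rw [h1, h2, map_neg, inner_neg_neg]
    rw [← hπsa.adjoint_eq, adjoint_inner_left, hπsa.adjoint_eq, hDrefl,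
      adjoint_inner_right, inner_conj_symm]
  -- finish
  rw [hM j j', hM j' j, hS, hS, ← hg', key, ← Complex.exp_conj]
  rw [map_mul, map_neg, map_div₀, map_one, map_ofNat]
end

section
/- Let H be a complex Hilbert space, J a conjugation on H, and π a self-adjoint unitary involution on H commuting with J. Let D be a bounded linear operator on H satisfying D = Dᵀ (symmetry, where Dᵀ = J ∘ D* ∘ J) and π ∘ D ∘ π = D*, and set S(f) := Complex.exp(−(1/2)·⟪J f, D f⟫). Let K be a ℂ-linear subspace of H. Then the following are equivalent: (a) for every N, every f_1, …, f_N ∈ K and every c_1, …, c_N ∈ ℂ, the sum Σ_{j,j'} conj(c_j) · c_{j'} · S(f_{j'} − π(J f_j)) is a nonnegative real number; (b) for every f ∈ K, the inner product ⟪f, π(D f)⟫ is a nonnegative real number. -/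
open ContinuousLinearMap
open scoped ComplexConjugate ComplexOrder
open Nat

private lemma pk_all_one {N : ℕ} (x : Fin N → ℂ) :
    0 ≤ ∑ j, ∑ k, conj (x j) * x k * (1:ℂ) := by
  have h : ∑ j, ∑ k, conj (x j) * x k * (1:ℂ)
      = conj (∑ j, x j) * ∑ k, x k := by
    rw [map_sum, Finset.sum_mul]
    refine Finset.sum_congr rfl fun j _ => ?_
    rw [Finset.mul_sum]
    exact Finset.sum_congr rfl fun k _ => by ring
  rw [h]
  exact star_mul_self_nonneg (∑ j, x j)

private lemma pk_mul {N : ℕ} {A C : Fin N → Fin N → ℂ}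
    (hherm : ∀ j k, conj (A j k) = A k j)
    (hA : ∀ x : Fin N → ℂ, 0 ≤ ∑ j, ∑ k, conj (x j) * x k * A j k)
    (hC : ∀ x : Fin N → ℂ, 0 ≤ ∑ j, ∑ k, conj (x j) * x k * C j k)
    (x : Fin N → ℂ) :
    0 ≤ ∑ j, ∑ k, conj (x j) * x k * (A j k * C j k) := by
  have hpsd : (Matrix.of A).PosSemidef := by
    rw [Matrix.posSemidef_iff_dotProduct_mulVec]
    constructor
    · ext j k
      exact hherm k j
    · intro y
      have e : dotProduct (star y) ((Matrix.of A).mulVec y)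
          = ∑ j, ∑ k, conj (y j) * y k * A j k := by
        simp only [dotProduct, Matrix.mulVec, Matrix.of_apply, Pi.star_apply,
          Finset.mul_sum]
        refine Finset.sum_congr rfl fun j _ => Finset.sum_congr rfl fun k _ => ?_
        rw [starRingEnd_apply]; ring
      rw [e]; exact hA y
  obtain ⟨B, hB⟩ : ∃ B : Matrix (Fin N) (Fin N) ℂ, Matrix.of A = B.conjTranspose * B := by
    open scoped MatrixOrder in
    exact CStarAlgebra.nonneg_iff_eq_star_mul_self.mp hpsd.nonneg
  have hentry : ∀ j k, A j k = ∑ l, conj (B l j) * B l k := by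
    intro j k
    have h0 : A j k = (B.conjTranspose * B) j k := congrFun (congrFun hB j) k
    rw [h0, Matrix.mul_apply]
    exact Finset.sum_congr rfl fun l _ => by
      rw [Matrix.conjTranspose_apply, starRingEnd_apply]
  have step : ∀ j k, conj (x j) * x k * (A j k * C j k)
      = ∑ l, conj (x j * B l j) * (x k * B l k) * C j k := by
    intro j k
    rw [hentry j k, Finset.sum_mul, Finset.mul_sum]
    refine Finset.sum_congr rfl fun l _ => ?_
    simp only [map_mul]; ring
  have tot : ∑ j, ∑ k, conj (x j) * x k * (A j k * C j k)
      = ∑ l, ∑ j, ∑ k, conj (x j * B l j) * (x k * B l k) * C j k := by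
    simp only [step]
    rw [show (∑ j, ∑ k, ∑ l, conj (x j * B l j) * (x k * B l k) * C j k)
        = ∑ j, ∑ l, ∑ k, conj (x j * B l j) * (x k * B l k) * C j k from
      Finset.sum_congr rfl fun j _ => Finset.sum_comm, Finset.sum_comm]
  rw [tot]
  exact Finset.sum_nonneg fun l _ => hC (fun j => x j * B l j)

private lemma pk_exp {N : ℕ} {A : Fin N → Fin N → ℂ}
    (hherm : ∀ j k, conj (A j k) = A k j)
    (hA : ∀ x : Fin N → ℂ, 0 ≤ ∑ j, ∑ k, conj (x j) * x k * A j k)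
    (x : Fin N → ℂ) :
    0 ≤ ∑ j, ∑ k, conj (x j) * x k * Complex.exp (A j k) := by
  have hpow : ∀ n : ℕ, ∀ y : Fin N → ℂ, 0 ≤ ∑ j, ∑ k, conj (y j) * y k * A j k ^ n := by
    intro n
    induction n with
    | zero => intro y; simpa using pk_all_one y
    | succ n ih =>
        intro y
        have h := pk_mul hherm hA ih y
        have e : ∀ j k, A j k * A j k ^ n = A j k ^ (n + 1) := fun j k => (pow_succ' _ _).symm
        simp only [e] at h
        exact h
  have hsummable : ∀ j k, Summable (fun n : ℕ => conj (x j) * x k * (A j k ^ n / n !)) :=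
    fun j k => (NormedSpace.expSeries_div_summable (A j k)).mul_left _
  have hexp : ∀ j k, conj (x j) * x k * Complex.exp (A j k)
      = ∑' n : ℕ, conj (x j) * x k * (A j k ^ n / n !) := by
    intro j k
    rw [Complex.exp_eq_exp_ℂ, NormedSpace.exp_eq_tsum_div, tsum_mul_left]
  have h1 : ∀ j : Fin N, Summable fun n : ℕ => ∑ k, conj (x j) * x k * (A j k ^ n / n !) :=
    fun j => (hasSum_sum (fun k _ => (hsummable j k).hasSum)).summable
  have swap : ∑ j, ∑ k, conj (x j) * x k * Complex.exp (A j k)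
      = ∑' n : ℕ, ∑ j, ∑ k, conj (x j) * x k * (A j k ^ n / n !) := by
    simp only [hexp]
    have e1 : ∀ j : Fin N, ∑ k, ∑' n : ℕ, conj (x j) * x k * (A j k ^ n / n !)
        = ∑' n : ℕ, ∑ k, conj (x j) * x k * (A j k ^ n / n !) :=
      fun j => (Summable.tsum_finsetSum fun k _ => hsummable j k).symm
    simp only [e1]
    exact (Summable.tsum_finsetSum fun j _ => h1 j).symm
  rw [swap]
  refine tsum_nonneg fun n => ?_
  have e2 : ∑ j, ∑ k, conj (x j) * x k * (A j k ^ n / (n ! : ℂ))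
      = ((n ! : ℂ))⁻¹ * ∑ j, ∑ k, conj (x j) * x k * A j k ^ n := by
    rw [Finset.mul_sum]
    refine Finset.sum_congr rfl fun j _ => ?_
    rw [Finset.mul_sum]
    refine Finset.sum_congr rfl fun k _ => ?_
    rw [div_eq_mul_inv]; ring
  rw [e2]
  refine mul_nonneg ?_ (hpow n x)
  rw [← Complex.ofReal_natCast, ← Complex.ofReal_inv, Complex.zero_le_real]
  positivity






open ContinuousLinearMap
open scoped ComplexConjugate ComplexOrder

/-- **Reflection positivity of a Gaussian functional.** For a symmetric
covariance `D` with `π ∘ D ∘ π = D*` and Gaussian characteristic functional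
`S g = exp (-(1/2) ⟪J g, D g⟫)`, reflection positivity of `S` on a subspace
`K` is equivalent to positivity of `π ∘ D` on `K`. -/
theorem gaussian_reflection_positivity_iff
    {H : Type*} [NormedAddCommGroup H] [InnerProductSpace ℂ H] [CompleteSpace H]
    (J : H → H)
    (hJadd : ∀ x y, J (x + y) = J x + J y)
    (hJsmul : ∀ (a : ℂ) (x : H), J (a • x) = (conj a) • J x)
    (hJinv : ∀ x, J (J x) = x)
    (hJinner : ∀ x y, (inner ℂ (J x) (J y) : ℂ) = conj (inner ℂ x y : ℂ))
    (π : H →L[ℂ] H) (hπsa : IsSelfAdjoint π) (hπinv : π ∘L π = 1)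
    (hπJ : ∀ x, π (J x) = J (π x))
    (D : H →L[ℂ] H)
    (hDsymm : ∀ x, D x = J (adjoint D (J x)))
    (hDrefl : ∀ x, π (D (π x)) = adjoint D x)
    (S : H → ℂ)
    (hS : ∀ g, S g = Complex.exp (-(1/2 : ℂ) * (inner ℂ (J g) (D g) : ℂ)))
    (K : Submodule ℂ H) :
    (∀ (N : ℕ) (f : Fin N → H), (∀ j, f j ∈ K) → ∀ c : Fin N → ℂ,
        0 ≤ ∑ j, ∑ j', conj (c j) * c j' * S (f j' - π (J (f j))))
      ↔ (∀ f ∈ K, 0 ≤ (inner ℂ f (π (D f)) : ℂ)) := by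
  set T : H →L[ℂ] H := π ∘L D with hT
  set Q : H → ℂ := fun g => (inner ℂ (J g) (D g) : ℂ) with hQdef
  set E : H → ℂ := fun g => Complex.exp (-(1/2 : ℂ) * Q g) with hEdef
  have hπ1 : ∀ x, π (π x) = x := fun x => by
    have := congrArg (fun (L : H →L[ℂ] H) => L x) hπinv
    simpa using this
  have hπadj : adjoint π = π := by
    rw [← ContinuousLinearMap.star_eq_adjoint]; exact hπsa
  have hπinner : ∀ x y : H, (inner ℂ (π x) y : ℂ) = inner ℂ x (π y) := by
    intro x y
    conv_lhs => rw [← hπadj]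
    exact ContinuousLinearMap.adjoint_inner_left π y x
  have hTs : ∀ x y : H, (inner ℂ (T x) y : ℂ) = inner ℂ x (T y) := by
    intro x y
    have h1 : (inner ℂ (π (D x)) y : ℂ) = inner ℂ (D x) (π y) := hπinner _ _
    have h2 : (inner ℂ (D x) (π y) : ℂ) = inner ℂ x (adjoint D (π y)) :=
      (ContinuousLinearMap.adjoint_inner_right D x (π y)).symm
    have h3 : adjoint D (π y) = π (D y) := by
      rw [← hDrefl (π y), hπ1]
    show (inner ℂ (π (D x)) y : ℂ) = inner ℂ x (π (D y))
    rw [h1, h2, h3]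
  have hJneg : ∀ x, J (-x) = - J x := fun x => by
    have := hJsmul (-1) x; simpa using this
  have hJsub : ∀ x y, J (x - y) = J x - J y := fun x y => by
    rw [sub_eq_add_neg, hJadd, hJneg, sub_eq_add_neg]
  have hJ0 : J 0 = 0 := by
    have := hJsmul 0 0; simpa using this
  -- key quadratic identity
  have hQkey : ∀ u v : H, Q (v - π (J u)) = Q v + conj (Q u) - 2 * (inner ℂ u (T v) : ℂ) := by
    intro u v
    have h1 : J (v - π (J u)) = J v - π u := by rw [hJsub, hπJ, hJinv]
    have h2 : D (v - π (J u)) = D v - J (T u) := by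
      rw [map_sub]
      congr 1
      have e1 : D (π (J u)) = π (adjoint D (J u)) := by
        rw [← hDrefl (J u), hπ1]
      have e2 : adjoint D (J u) = J (D u) := by
        have := congrArg J (hDsymm u)
        rw [hJinv] at this
        exact this.symm
      rw [e1, e2, hπJ]
      rfl
    have p1 : (inner ℂ (J v) (J (T u)) : ℂ) = inner ℂ u (T v) := by
      rw [hJinner, inner_conj_symm, hTs]
    have p2 : (inner ℂ (π u) (D v) : ℂ) = inner ℂ u (T v) := hπinner u (D v)
    have p3 : (inner ℂ (π u) (J (T u)) : ℂ) = conj (Q u) := by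
      conv_lhs => rw [← hJinv (π u)]
      rw [hJinner]
      congr 1
      show (inner ℂ (J (π u)) (π (D u)) : ℂ) = Q u
      rw [← hπJ, hπinner, hπ1]
    show (inner ℂ (J (v - π (J u))) (D (v - π (J u))) : ℂ) = _
    rw [h1, h2, inner_sub_left, inner_sub_right, inner_sub_right, p1, p2, p3]
    have eQ : (inner ℂ (J v) (D v) : ℂ) = Q v := rfl
    rw [eQ]
    ring
  have hconjhalf : conj (-(1/2 : ℂ)) = -(1/2 : ℂ) := by
    apply Complex.ext <;> simp
  have hSkey : ∀ u v : H,
      S (v - π (J u)) = conj (E u) * (E v * Complex.exp (inner ℂ u (T v))) := by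
    intro u v
    rw [hS]
    have eQ2 : (inner ℂ (J (v - π (J u))) (D (v - π (J u))) : ℂ) = Q (v - π (J u)) := rfl
    rw [eQ2, hQkey]
    have e : -(1/2 : ℂ) * (Q v + conj (Q u) - 2 * (inner ℂ u (T v) : ℂ))
        = conj (-(1/2 : ℂ) * Q u) + (-(1/2 : ℂ) * Q v + inner ℂ u (T v)) := by
      rw [map_mul, hconjhalf]; ring
    rw [e, Complex.exp_add, Complex.exp_add, Complex.exp_conj]
  have hsum : ∀ (N : ℕ) (f : Fin N → H) (c : Fin N → ℂ),
      ∑ j, ∑ k, conj (c j) * c k * S (f k - π (J (f j)))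
      = ∑ j, ∑ k, conj (c j * E (f j)) * (c k * E (f k))
          * Complex.exp (inner ℂ (f j) (T (f k))) := by
    intro N f c
    refine Finset.sum_congr rfl fun j _ => Finset.sum_congr rfl fun k _ => ?_
    rw [hSkey]
    simp only [map_mul]
    ring
  have hE0 : E 0 = 1 := by
    have : Q 0 = 0 := by
      show (inner ℂ (J 0) (D 0) : ℂ) = 0
      rw [hJ0, map_zero, inner_zero_right]
    rw [hEdef]
    show Complex.exp (-(1/2:ℂ) * Q 0) = 1
    rw [this, mul_zero, Complex.exp_zero]
  have hEne : ∀ g, E g ≠ 0 := fun g => Complex.exp_ne_zero _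
  constructor
  · -- reflection positivity ⟹ positivity of πD on K
    intro hpos f hf
    set m : ℂ := inner ℂ f (T f) with hm
    have hmc : conj m = m := by
      rw [hm, inner_conj_symm]
      exact hTs f f
    obtain ⟨r, hr⟩ : ∃ r : ℝ, m = (r : ℂ) := ⟨m.re, (Complex.conj_eq_iff_re.mp hmc).symm⟩
    have hmem : ∀ j : Fin 2, (![0, f] : Fin 2 → H) j ∈ K := by
      intro j; fin_cases j
      · exact K.zero_mem
      · exact hf
    have h := hpos 2 ![0, f] hmem ![1, -(Real.exp (-r) : ℂ) / E f]
    rw [hsum] at h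
    have hA00 : (inner ℂ ((![0, f] : Fin 2 → H) 0) (T ((![0, f] : Fin 2 → H) 0)) : ℂ) = 0 := by
      simp [inner_zero_left]
    have hA01 : (inner ℂ ((![0, f] : Fin 2 → H) 0) (T ((![0, f] : Fin 2 → H) 1)) : ℂ) = 0 := by
      simp [inner_zero_left]
    have hA10 : (inner ℂ ((![0, f] : Fin 2 → H) 1) (T ((![0, f] : Fin 2 → H) 0)) : ℂ) = 0 := by
      simp [inner_zero_right]
    have hA11 : (inner ℂ ((![0, f] : Fin 2 → H) 1) (T ((![0, f] : Fin 2 → H) 1)) : ℂ) = m := by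
      simp [hm]
    rw [Fin.sum_univ_two] at h
    rw [Fin.sum_univ_two, Fin.sum_univ_two] at h
    rw [hA00, hA01, hA10, hA11] at h
    have hd : (-(Real.exp (-r) : ℂ) / E f) * E f = -(Real.exp (-r) : ℂ) :=
      div_mul_cancel₀ _ (hEne f)
    simp only [Matrix.cons_val_zero, Matrix.cons_val_one, Matrix.head_cons] at h
    rw [hE0] at h
    rw [hd, hr] at h
    -- simplify h to a real statement
    have hconj1 : conj (1 * (1:ℂ)) = 1 := by norm_num
    have hcr : conj (-(Real.exp (-r) : ℂ)) = -(Real.exp (-r) : ℂ) := by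
      rw [map_neg, Complex.conj_ofReal]
    rw [hconj1, hcr, Complex.exp_zero] at h
    rw [← Complex.ofReal_exp] at h
    have hee : Complex.exp (-(r:ℂ)) * Complex.exp (-(r:ℂ)) * Complex.exp (r:ℂ)
        = Complex.exp (-(r:ℂ)) := by
      rw [← Complex.exp_add, ← Complex.exp_add]
      norm_num
    have hh0 : (0:ℂ) ≤ 1 - Complex.exp (-(r:ℂ)) := by
      convert h using 1
      push_cast
      linear_combination -hee
    rw [show -(r:ℂ) = ((-r : ℝ) : ℂ) by push_cast; ring, ← Complex.ofReal_exp,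
      show (1:ℂ) - ((Real.exp (-r) : ℝ) : ℂ) = ((1 - Real.exp (-r) : ℝ) : ℂ) by
        push_cast; ring] at hh0
    have hh := hh0
    rw [Complex.zero_le_real] at hh
    have : Real.exp (-r) ≤ 1 := by linarith
    have hr0 : 0 ≤ r := by
      have := Real.exp_le_one_iff.mp this
      linarith
    show (0:ℂ) ≤ inner ℂ f (π (D f))
    have : (inner ℂ f (π (D f)) : ℂ) = m := rfl
    rw [this, hr, Complex.zero_le_real]
    exact hr0
  · -- positivity of πD on K ⟹ reflection positivity
    intro hpos N f hf c
    rw [hsum]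
    have hherm : ∀ j k, conj ((inner ℂ (f j) (T (f k)) : ℂ)) = inner ℂ (f k) (T (f j)) := by
      intro j k
      rw [inner_conj_symm, hTs]
    have hquad : ∀ x : Fin N → ℂ,
        0 ≤ ∑ j, ∑ k, conj (x j) * x k * (inner ℂ (f j) (T (f k)) : ℂ) := by
      intro x
      have hg : (∑ j, x j • f j) ∈ K :=
        Submodule.sum_mem _ fun j _ => K.smul_mem _ (hf j)
      have h := hpos _ hg
      have e : (inner ℂ (∑ j, x j • f j) (π (D (∑ k, x k • f k))) : ℂ)
          = ∑ j, ∑ k, conj (x j) * x k * inner ℂ (f j) (T (f k)) := by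
        show (inner ℂ (∑ j, x j • f j) (T (∑ k, x k • f k)) : ℂ) = _
        rw [map_sum, sum_inner]
        refine Finset.sum_congr rfl fun j _ => ?_
        rw [inner_smul_left, inner_sum, Finset.mul_sum]
        refine Finset.sum_congr rfl fun k _ => ?_
        rw [map_smul, inner_smul_right]
        ring
      rw [e] at h
      exact h
    exact pk_exp hherm hquad (fun j => c j * E (f j))
end

section
/- Let H be a complex Hilbert space, J a conjugation on H, and π a self-adjoint unitary involution on H commuting with J. Let σ be a bounded linear operator on H with transpose σᵀ := J ∘ σ* ∘ J, and assume σ ∘ σᵀ = σᵀ ∘ σ and π ∘ σᵀ ∘ π = σ*. Set D := σ ∘ σᵀ. Then π ∘ D = σ* ∘ π ∘ σ and D ∘ π = σ ∘ π ∘ σ*, and both π ∘ D and D ∘ π are self-adjoint bounded operators on H. -/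
open ContinuousLinearMap
open scoped ComplexConjugate

/-- **Time reflection of the neutral covariance (Proposition III.1).**
If `σ ∘ σᵀ = σᵀ ∘ σ` and `π ∘ σᵀ ∘ π = σ*`, where `σᵀ = J ∘ σ* ∘ J`, then
for `D = σ ∘ σᵀ` one has `π ∘ D = σ* ∘ π ∘ σ` and `D ∘ π = σ ∘ π ∘ σ*`, and
both `π ∘ D` and `D ∘ π` are self-adjoint. -/
theorem time_reflection_covariance_selfAdjoint
    {H : Type*} [NormedAddCommGroup H] [InnerProductSpace ℂ H] [CompleteSpace H]
    (J : H → H)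
    (hJadd : ∀ x y, J (x + y) = J x + J y)
    (hJsmul : ∀ (a : ℂ) (x : H), J (a • x) = (conj a) • J x)
    (hJinv : ∀ x, J (J x) = x)
    (hJinner : ∀ x y, (inner ℂ (J x) (J y) : ℂ) = conj (inner ℂ x y : ℂ))
    (π : H →L[ℂ] H) (hπsa : IsSelfAdjoint π) (hπinv : π ∘L π = 1)
    (hπJ : ∀ x, π (J x) = J (π x))
    (σ σT : H →L[ℂ] H)
    (hσT : ∀ x, σT x = J (adjoint σ (J x)))
    (hcomm : σ ∘L σT = σT ∘L σ)
    (hrefl : π ∘L σT ∘L π = adjoint σ) :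
    π ∘L (σ ∘L σT) = adjoint σ ∘L (π ∘L σ) ∧
    (σ ∘L σT) ∘L π = σ ∘L (π ∘L adjoint σ) ∧
    IsSelfAdjoint (π ∘L (σ ∘L σT)) ∧
    IsSelfAdjoint ((σ ∘L σT) ∘L π) := by
  have h1 : π ∘L σT = adjoint σ ∘L π := by
    calc π ∘L σT = (π ∘L σT ∘L π) ∘L π := by
          rw [comp_assoc, comp_assoc, hπinv, one_def, comp_id]
      _ = adjoint σ ∘L π := by rw [hrefl]
  have h2 : σT ∘L π = π ∘L adjoint σ := by
    calc σT ∘L π = π ∘L (π ∘L σT ∘L π) := by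
          rw [← comp_assoc, ← comp_assoc, hπinv, one_def, id_comp]
      _ = π ∘L adjoint σ := by rw [hrefl]
  have e1 : π ∘L (σ ∘L σT) = adjoint σ ∘L (π ∘L σ) := by
    rw [hcomm, ← comp_assoc, h1, comp_assoc]
  have e2 : (σ ∘L σT) ∘L π = σ ∘L (π ∘L adjoint σ) := by
    rw [comp_assoc, h2]
  refine ⟨e1, e2, ?_, ?_⟩
  · rw [e1, IsSelfAdjoint, star_eq_adjoint, ← comp_assoc, adjoint_comp,
      adjoint_comp, adjoint_adjoint, hπsa.adjoint_eq, comp_assoc]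
  · rw [e2, IsSelfAdjoint, star_eq_adjoint, ← comp_assoc, adjoint_comp,
      adjoint_comp, adjoint_adjoint, hπsa.adjoint_eq, comp_assoc]
end

section
/- Let H be a complex Hilbert space, J a conjugation on H, and π a self-adjoint unitary involution on H commuting with J. Let K be a subspace of H with J(K) ⊆ K, and let D be a bounded linear operator on H satisfying D = Dᵀ (symmetry, where Dᵀ = J ∘ D* ∘ J) and π ∘ D ∘ π = D*. If ⟪f, π(D f)⟫ is a nonnegative real number for every f ∈ K, then ⟪f, D(π f)⟫ is a nonnegative real number for every f ∈ K. -/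
open ContinuousLinearMap
open scoped ComplexConjugate ComplexOrder

/-- **Reflection positivity implies double reflection positivity
(Proposition VI.2).** Let `D` be symmetric (`D = J ∘ D* ∘ J`) with
`π ∘ D ∘ π = D*`, and let `K` be a subspace invariant under the conjugation
`J`.  If `0 ≤ ⟪f, π (D f)⟫` for all `f ∈ K`, then `0 ≤ ⟪f, D (π f)⟫` for all
`f ∈ K`. -/
theorem reflection_positivity_implies_double
    {H : Type*} [NormedAddCommGroup H] [InnerProductSpace ℂ H] [CompleteSpace H]
    (J : H → H)
    (hJadd : ∀ x y, J (x + y) = J x + J y)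
    (hJsmul : ∀ (a : ℂ) (x : H), J (a • x) = (conj a) • J x)
    (hJinv : ∀ x, J (J x) = x)
    (hJinner : ∀ x y, (inner ℂ (J x) (J y) : ℂ) = conj (inner ℂ x y : ℂ))
    (π : H →L[ℂ] H) (hπsa : IsSelfAdjoint π) (hπinv : π ∘L π = 1)
    (hπJ : ∀ x, π (J x) = J (π x))
    (K : Submodule ℂ H) (hJK : ∀ x ∈ K, J x ∈ K)
    (D : H →L[ℂ] H)
    (hDsymm : ∀ x, D x = J (adjoint D (J x)))
    (hDrefl : ∀ x, π (D (π x)) = adjoint D x)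
    (hRP : ∀ f ∈ K, 0 ≤ (inner ℂ f (π (D f)) : ℂ)) :
    ∀ f ∈ K, 0 ≤ (inner ℂ f (D (π f)) : ℂ) := by
  intro f hf
  have hππ : ∀ x, π (π x) = x := by
    intro x
    have := congrFun (congrArg DFunLike.coe hπinv) x
    simpa using this
  have key : D (π f) = J (π (D (J f))) := by
    rw [hDsymm (π f), ← hπJ, ← hDrefl (π (J f)), hππ]
  have h2 : ∀ x, (inner ℂ f (J x) : ℂ) = conj (inner ℂ (J f) x : ℂ) := fun x => by
    conv_lhs => rw [(hJinv f).symm]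
    rw [hJinner]
  rw [key, h2]
  have h := hRP (J f) (hJK f hf)
  rw [Complex.le_def] at h ⊢
  simp only [Complex.zero_re, Complex.zero_im, Complex.conj_re, Complex.conj_im] at h ⊢
  exact ⟨h.1, by rw [← h.2]; ring⟩
end

section
/- Let H be a complex Hilbert space, π a self-adjoint unitary involution on H, and V a unitary operator on H with π ∘ V ∘ π = V⁻¹. Let D be a bounded linear operator on H commuting with V, and let K be a subspace of H with V(K) ⊆ K and (V ∘ π)(K) ⊆ K. Assume that for every g ∈ K both ⟪g, π(D g)⟫ and ⟪g, D(π g)⟫ are nonnegative real numbers. Then for every f ∈ K and every integer n ∈ ℤ, the inner product ⟪f, π(V^{−2n}(D f))⟫ is a nonnegative real number. Consequently, if the series Σ_{n ∈ ℤ} ⟪f, π(V^{−2n}(D f))⟫ is summable, its sum is a nonnegative real number. -/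
open ContinuousLinearMap
open scoped ComplexConjugate ComplexOrder

/-- **Compactification of reflection positivity, case `i = j`
(Proposition VI.3).**  Let `π` be a self-adjoint unitary involution, `V` a
unitary with `π ∘ V ∘ π = V⁻¹`, `D` a bounded operator commuting with `V`,
and `K` a subspace with `V K ⊆ K` and `V π K ⊆ K`.  If both `⟪g, π (D g)⟫`
and `⟪g, D (π g)⟫` are nonnegative reals for all `g ∈ K`, then every term
`⟪f, π (V^{-2n} (D f))⟫` (`f ∈ K`, `n : ℤ`) is a nonnegative real, and hence
so is the sum of a summable such series. -/
theorem compactification_reflection_positivity_terms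
    {H : Type*} [NormedAddCommGroup H] [InnerProductSpace ℂ H] [CompleteSpace H]
    (π : H →L[ℂ] H) (hπsa : IsSelfAdjoint π) (hπinv : π ∘L π = 1)
    (V : H ≃L[ℂ] H)
    (hVunit : ∀ x y, (inner ℂ (V x) (V y) : ℂ) = (inner ℂ x y : ℂ))
    (hπVπ : ∀ x, π (V (π x)) = V⁻¹ x)
    (D : H →L[ℂ] H) (hDV : ∀ x, D (V x) = V (D x))
    (K : Submodule ℂ H)
    (hVK : ∀ x ∈ K, V x ∈ K)
    (hVπK : ∀ x ∈ K, V (π x) ∈ K)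
    (hRP : ∀ g ∈ K, 0 ≤ (inner ℂ g (π (D g)) : ℂ))
    (hRP' : ∀ g ∈ K, 0 ≤ (inner ℂ g (D (π g)) : ℂ)) :
    (∀ f ∈ K, ∀ n : ℤ,
        0 ≤ (inner ℂ f (π ((V ^ (-(2 * n))) (D f))) : ℂ)) ∧
    (∀ f ∈ K,
        Summable (fun n : ℤ => (inner ℂ f (π ((V ^ (-(2 * n))) (D f))) : ℂ)) →
        0 ≤ ∑' n : ℤ, (inner ℂ f (π ((V ^ (-(2 * n))) (D f))) : ℂ)) := by
  -- basic apply lemmas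
  have hmul : ∀ (a b : H ≃L[ℂ] H) (x : H), (a * b) x = a (b x) := fun _ _ _ => rfl
  have hone : ∀ x : H, (1 : H ≃L[ℂ] H) x = x := fun _ => rfl
  have hππ : ∀ x, π (π x) = x := by
    intro x
    have := ContinuousLinearMap.ext_iff.mp hπinv x
    simpa using this
  have hπV : ∀ x, π (V x) = V⁻¹ (π x) := by
    intro x
    have := hπVπ (π x)
    rwa [hππ] at this
  have hVVinv : ∀ z : H, V (V⁻¹ z) = z := fun z => V.apply_symm_apply z
  have hVinvV : ∀ z : H, V⁻¹ (V z) = z := fun z => V.symm_apply_apply z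
  have hπVinv : ∀ x, π (V⁻¹ x) = V (π x) := by
    intro x
    have := congrArg π (hπVπ x)
    rw [hππ] at this
    exact this.symm
  -- V⁻¹ is also unitary
  have hVinvunit : ∀ x y, (inner ℂ (V⁻¹ x) (V⁻¹ y) : ℂ) = inner ℂ x y := by
    intro x y
    have := hVunit (V⁻¹ x) (V⁻¹ y)
    rw [hVVinv, hVVinv] at this
    exact this.symm
  -- D commutes with V⁻¹
  have hDVinv : ∀ x, D (V⁻¹ x) = V⁻¹ (D x) := by
    intro x
    have h1 : V (D (V⁻¹ x)) = D x := by
      rw [← hDV (V⁻¹ x), hVVinv]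
    calc D (V⁻¹ x) = V⁻¹ (V (D (V⁻¹ x))) := (hVinvV _).symm
      _ = V⁻¹ (D x) := by rw [h1]
  -- zpow versions
  have hπVz : ∀ (k : ℤ) (x : H), π ((V ^ k) x) = (V ^ (-k)) (π x) := by
    intro k
    induction k using Int.induction_on with
    | zero => intro x; simp [hone]
    | succ k ih =>
        intro x
        have h1 : (V ^ ((k : ℤ) + 1)) x = (V ^ (k : ℤ)) (V x) := by
          rw [zpow_add_one, hmul]
        rw [h1, ih, hπV]
        have h2 : (-(k : ℤ) - 1) = (-(k : ℤ)) + (-1) := by ring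
        rw [show (-((k : ℤ) + 1)) = -(k : ℤ) - 1 by ring, h2, zpow_add, hmul, zpow_neg_one]
    | pred k ih =>
        intro x
        have h1 : (V ^ (-(k : ℤ) - 1)) x = (V ^ (-(k : ℤ))) (V⁻¹ x) := by
          rw [sub_eq_add_neg, zpow_add, hmul, zpow_neg_one]
        rw [h1, ih, hπVinv]
        rw [show (-(-(k : ℤ) - 1)) = (k : ℤ) + 1 by ring, show ((k : ℤ) + 1) = -(-(k:ℤ)) + 1 by ring,
          zpow_add, hmul, zpow_one]
  have hDVz : ∀ (k : ℤ) (x : H), D ((V ^ k) x) = (V ^ k) (D x) := by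
    intro k
    induction k using Int.induction_on with
    | zero => intro x; simp [hone]
    | succ k ih =>
        intro x
        rw [zpow_add_one, hmul, hmul, ih, hDV]
    | pred k ih =>
        intro x
        rw [sub_eq_add_neg, zpow_add, hmul, hmul, ih, zpow_neg_one, hDVinv]
  have hUz : ∀ (k : ℤ) (x y : H), (inner ℂ ((V ^ k) x) ((V ^ k) y) : ℂ) = inner ℂ x y := by
    intro k
    induction k using Int.induction_on with
    | zero => intro x y; simp [hone]
    | succ k ih =>
        intro x y
        rw [zpow_add_one, hmul, hmul, ih, hVunit]
    | pred k ih =>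
        intro x y
        rw [sub_eq_add_neg, zpow_add, hmul, hmul, zpow_neg_one, ih, hVinvunit]
  have hshift : ∀ (k : ℤ) (x y : H), (inner ℂ ((V ^ k) x) y : ℂ) = inner ℂ x ((V ^ (-k)) y) := by
    intro k x y
    have : y = (V ^ k) ((V ^ (-k)) y) := by
      rw [← hmul, ← zpow_add]
      simp [hone]
    conv_lhs => rw [this]
    rw [hUz]
  -- membership of nat powers
  have hKpow : ∀ (m : ℕ) (x : H), x ∈ K → (V ^ (m : ℤ)) x ∈ K := by
    intro m
    induction m with
    | zero => intro x hx; simpa [hone] using hx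
    | succ m ih =>
        intro x hx
        have : (V ^ ((m : ℤ) + 1)) x = (V ^ (m : ℤ)) (V x) := by
          rw [zpow_add_one, hmul]
        rw [show ((m + 1 : ℕ) : ℤ) = (m : ℤ) + 1 by push_cast; ring, this]
        exact ih _ (hVK x hx)
  -- π self-adjoint moves across the inner product
  have hπadj : ∀ x y : H, (inner ℂ x (π y) : ℂ) = inner ℂ (π x) y := by
    intro x y
    have := hπsa.adjoint_eq ▸ (ContinuousLinearMap.adjoint_inner_left π y x)
    -- fallback direct proof
    rw [← ContinuousLinearMap.adjoint_inner_left, hπsa.adjoint_eq]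
  -- The key pointwise estimate
  have key : ∀ f ∈ K, ∀ n : ℤ, 0 ≤ (inner ℂ f (π ((V ^ (-(2 * n))) (D f))) : ℂ) := by
    intro f hf n
    have hterm : (inner ℂ f (π ((V ^ (-(2 * n))) (D f))) : ℂ)
        = inner ℂ ((V ^ (-(2 * n))) f) (π (D f)) := by
      rw [hπVz, ← hshift (-(2*n))]
    rw [hterm]
    rcases le_or_gt n 0 with hn | hn
    · -- n ≤ 0 : use g = V^m f with m = -n ≥ 0
      obtain ⟨m, hm⟩ : ∃ m : ℕ, n = -(m : ℤ) := ⟨n.natAbs, by omega⟩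
      have hg : (V ^ (m : ℤ)) f ∈ K := hKpow m f hf
      have h0 := hRP _ hg
      have heq : (inner ℂ ((V ^ (m : ℤ)) f) (π (D ((V ^ (m : ℤ)) f))) : ℂ)
          = inner ℂ ((V ^ (-(2 * n))) f) (π (D f)) := by
        rw [hDVz, hπVz, ← hshift (m : ℤ), ← hmul, ← zpow_add,
          show (-(2 * n)) = (m : ℤ) + (m : ℤ) by rw [hm]; ring]
      rwa [heq] at h0
    · -- n ≥ 1 : use h = V^m (π f) with m = n ≥ 1
      obtain ⟨m, hm⟩ : ∃ m : ℕ, n = (m : ℤ) + 1 := ⟨(n - 1).toNat, by omega⟩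
      have hhK : (V ^ ((m : ℤ) + 1)) (π f) ∈ K := by
        have h1 : (V ^ ((m : ℤ) + 1)) (π f) = (V ^ (m : ℤ)) (V (π f)) := by
          rw [zpow_add_one, hmul]
        rw [h1]
        exact hKpow m _ (hVπK f hf)
      have h0 := hRP' _ hhK
      have hπh : π ((V ^ ((m : ℤ) + 1)) (π f)) = (V ^ (-((m : ℤ) + 1))) f := by
        rw [hπVz, hππ]
      have heq : (inner ℂ ((V ^ ((m : ℤ) + 1)) (π f)) (D (π ((V ^ ((m : ℤ) + 1)) (π f)))) : ℂ)
          = inner ℂ ((V ^ (-(2 * n))) f) (π (D f)) := by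
        rw [hπh, hDVz, ← hshift ((m : ℤ) + 1), ← hmul, ← zpow_add, hπadj, hπVz,
          show (-(-(2 * n))) = ((m : ℤ) + 1) + ((m : ℤ) + 1) by rw [hm]; ring]
      rwa [heq] at h0
  refine ⟨key, ?_⟩
  intro f hf _
  exact tsum_nonneg fun n => key f hf n
end

section
/- Let H be a complex Hilbert space, π a self-adjoint unitary involution on H, and T a unitary operator on H commuting with π. Let D be a bounded linear operator on H commuting with T, and let K be a subspace of H with T(K) ⊆ K and T⁻¹(K) ⊆ K. Assume ⟪g, π(D g)⟫ is a nonnegative real number for every g ∈ K. If f ∈ K and the family (⟪f, π(Tⁿ(D f))⟫)_{n ∈ ℤ} is absolutely summable, then the sum Σ_{n ∈ ℤ} ⟪f, π(Tⁿ(D f))⟫ is a nonnegative real number. -/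
open ContinuousLinearMap
open scoped ComplexConjugate ComplexOrder
open Filter
open scoped Topology

/-- **Compactification of reflection positivity, case `i ≠ j`
(Proposition VI.3).**  Let `π` be a self-adjoint unitary involution, `T` a
unitary commuting with `π`, `D` a bounded operator commuting with `T`, and
`K` a subspace with `T K ⊆ K` and `T⁻¹ K ⊆ K`.  If `⟪g, π (D g)⟫` is a
nonnegative real for all `g ∈ K`, then for `f ∈ K` with
`(⟪f, π (Tⁿ (D f))⟫)_{n ∈ ℤ}` absolutely summable, the sum
`∑' n, ⟪f, π (Tⁿ (D f))⟫` is a nonnegative real. -/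
theorem compactification_reflection_positivity_orthogonal
    {H : Type*} [NormedAddCommGroup H] [InnerProductSpace ℂ H] [CompleteSpace H]
    (π : H →L[ℂ] H) (hπsa : IsSelfAdjoint π) (hπinv : π ∘L π = 1)
    (T : H ≃L[ℂ] H)
    (hTunit : ∀ x y, (inner ℂ (T x) (T y) : ℂ) = (inner ℂ x y : ℂ))
    (hπT : ∀ x, π (T x) = T (π x))
    (D : H →L[ℂ] H) (hDT : ∀ x, D (T x) = T (D x))
    (K : Submodule ℂ H)
    (hTK : ∀ x ∈ K, T x ∈ K)
    (hTinvK : ∀ x ∈ K, T⁻¹ x ∈ K)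
    (hRP : ∀ g ∈ K, 0 ≤ (inner ℂ g (π (D g)) : ℂ))
    (f : H) (hf : f ∈ K)
    (hsum : Summable (fun n : ℤ => ‖(inner ℂ f (π ((T ^ n) (D f))) : ℂ)‖)) :
    0 ≤ ∑' n : ℤ, (inner ℂ f (π ((T ^ n) (D f))) : ℂ) := by
  set a : ℤ → ℂ := fun n => (inner ℂ f (π ((T ^ n) (D f))) : ℂ) with ha
  -- basic operator algebra
  have hmul : ∀ (A B : H ≃L[ℂ] H) (x : H), (A * B) x = A (B x) := fun A B x => rfl
  have hone : ∀ x : H, (1 : H ≃L[ℂ] H) x = x := fun x => rfl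
  have hinv : ∀ x, T⁻¹ x = T.symm x := fun x => rfl
  have hπTinv : ∀ x, π (T⁻¹ x) = T⁻¹ (π x) := by
    intro x
    have h := hπT (T.symm x)
    rw [T.apply_symm_apply] at h
    rw [hinv, hinv, h, T.symm_apply_apply]
  have hDTinv : ∀ x, D (T⁻¹ x) = T⁻¹ (D x) := by
    intro x
    have h := hDT (T.symm x)
    rw [T.apply_symm_apply] at h
    rw [hinv, hinv, h, T.symm_apply_apply]
  have hTunitinv : ∀ x y, (inner ℂ (T⁻¹ x) (T⁻¹ y) : ℂ) = inner ℂ x y := by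
    intro x y
    rw [← hTunit (T⁻¹ x) (T⁻¹ y), hinv, hinv, T.apply_symm_apply, T.apply_symm_apply]
  have hπTz : ∀ (n : ℤ) (x : H), π ((T ^ n) x) = (T ^ n) (π x) := by
    intro n
    induction n using Int.induction_on with
    | zero => intro x; rw [zpow_zero, hone, hone]
    | succ k ih => intro x; rw [zpow_add_one, hmul, hmul, ih, hπT]
    | pred k ih => intro x; rw [zpow_sub_one, hmul, hmul, ih, hπTinv]
  have hDTz : ∀ (n : ℤ) (x : H), D ((T ^ n) x) = (T ^ n) (D x) := by
    intro n
    induction n using Int.induction_on with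
    | zero => intro x; rw [zpow_zero, hone, hone]
    | succ k ih => intro x; rw [zpow_add_one, hmul, hmul, ih, hDT]
    | pred k ih => intro x; rw [zpow_sub_one, hmul, hmul, ih, hDTinv]
  have hTuz : ∀ (n : ℤ) (x y : H), (inner ℂ ((T ^ n) x) ((T ^ n) y) : ℂ) = inner ℂ x y := by
    intro n
    induction n using Int.induction_on with
    | zero => intro x y; rw [zpow_zero, hone, hone]
    | succ k ih => intro x y; rw [zpow_add_one, hmul, hmul, ih, hTunit]
    | pred k ih => intro x y; rw [zpow_sub_one, hmul, hmul, ih, hTunitinv]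
  have key : ∀ m n : ℤ,
      (inner ℂ ((T ^ m) f) (π (D ((T ^ n) f))) : ℂ) = a (n - m) := by
    intro m n
    have h1 : π (D ((T ^ n) f)) = (T ^ n) (π (D f)) := by rw [hDTz, hπTz]
    have h2 : π ((T ^ (n - m)) (D f)) = (T ^ (n - m)) (π (D f)) := hπTz _ _
    rw [ha]
    simp only
    rw [h1, h2, ← hTuz m f ((T ^ (n - m)) (π (D f)))]
    congr 1
    rw [← hmul, ← zpow_add]
    congr 2
    omega
  -- the averaging vectors
  have hTzK : ∀ (n : ℤ), (T ^ n) f ∈ K := by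
    intro n
    induction n using Int.induction_on with
    | zero => rw [zpow_zero]; exact hf
    | succ k ih =>
      have : ((k : ℤ) + 1) = 1 + k := by omega
      rw [this, zpow_add, zpow_one, hmul]
      exact hTK _ ih
    | pred k ih =>
      have : (-(k : ℤ) - 1) = -1 + -k := by omega
      rw [this, zpow_add, zpow_neg_one, hmul]
      exact hTinvK _ ih
  set g : ℕ → H := fun N => ∑ n ∈ Finset.Icc (-(N : ℤ)) N, (T ^ n) f with hg
  have hgK : ∀ N, g N ∈ K := fun N => Submodule.sum_mem _ fun n _ => hTzK n
  set u : ℕ → ℂ := fun N => (inner ℂ (g N) (π (D (g N))) : ℂ) with hu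
  have hupos : ∀ N, 0 ≤ u N := fun N => hRP _ (hgK N)
  have huS : ∀ N, u N = ∑ m ∈ Finset.Icc (-(N : ℤ)) N, ∑ n ∈ Finset.Icc (-(N : ℤ)) N,
      a (n - m) := by
    intro N
    rw [hu, hg]
    simp only [map_sum, sum_inner, inner_sum, key]
    rw [Finset.sum_comm]
  -- analysis part
  have hsa : Summable a := hsum.of_norm
  set L : ℂ := ∑' n, a n with hL
  set Sn : ℝ := ∑' n, ‖a n‖ with hSn
  set E : ℕ → ℝ := fun r => Sn - ∑ k ∈ Finset.Icc (-(r : ℤ)) r, ‖a k‖ with hE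
  have hE0 : ∀ r, 0 ≤ E r := by
    intro r
    have h := Summable.sum_le_tsum (Finset.Icc (-(r : ℤ)) r) (fun k _ => norm_nonneg (a k)) hsum
    rw [hE]; simp only
    linarith
  have hEbound : ∀ (W : Finset ℤ) (r : ℕ), Finset.Icc (-(r : ℤ)) r ⊆ W →
      ‖L - ∑ k ∈ W, a k‖ ≤ E r := by
    intro W r hWr
    have h1 := Summable.sum_add_tsum_compl (s := W) hsa
    have h2 := Summable.sum_add_tsum_compl (s := W) hsum
    have h3 : L - ∑ k ∈ W, a k = ∑' k : ↑((W : Set ℤ)ᶜ), a ↑k := by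
      rw [hL, ← h1]; ring
    rw [h3]
    calc ‖∑' k : ↑((W : Set ℤ)ᶜ), a ↑k‖ ≤ ∑' k : ↑((W : Set ℤ)ᶜ), ‖a ↑k‖ :=
          norm_tsum_le_tsum_norm (hsum.subtype _)
      _ = Sn - ∑ k ∈ W, ‖a k‖ := by rw [hSn, ← h2]; ring
      _ ≤ E r := by
          have h4 := Finset.sum_le_sum_of_subset_of_nonneg hWr
            (fun k _ _ => norm_nonneg (a k))
          rw [hE]; simp only
          linarith
  have hEtend : Tendsto E atTop (𝓝 0) := by
    have hmono : Monotone fun r : ℕ => Finset.Icc (-(r : ℤ)) r := by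
      intro i j hij
      exact Finset.Icc_subset_Icc (by omega) (by omega)
    have hcov : ∀ x : ℤ, ∃ r : ℕ, x ∈ Finset.Icc (-(r : ℤ)) r := fun x =>
      ⟨x.natAbs, by simp only [Finset.mem_Icc]; omega⟩
    have h4 : Tendsto (fun r : ℕ => ∑ k ∈ Finset.Icc (-(r : ℤ)) r, ‖a k‖) atTop (𝓝 Sn) :=
      hsum.hasSum.comp (Filter.tendsto_atTop_finset_of_monotone hmono hcov)
    have h5 := (tendsto_const_nhds (x := Sn) (f := atTop (α := ℕ))).sub h4
    rw [sub_self] at h5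
    exact h5
  -- the main estimate
  have hmain : ∀ N : ℕ, ‖u N - ((2 * N + 1 : ℕ) : ℂ) * L‖
      ≤ 2 * ∑ r ∈ Finset.range (N + 1), E r := by
    intro N
    have hcard : (Finset.Icc (-(N : ℤ)) N).card = 2 * N + 1 := by
      rw [Int.card_Icc]; omega
    have hw : ∀ m ∈ Finset.Icc (-(N : ℤ)) N,
        ∑ n ∈ Finset.Icc (-(N : ℤ)) N, a (n - m)
          = ∑ k ∈ Finset.Icc (-(N : ℤ) + -m) ((N : ℤ) + -m), a k := by
      intro m _
      rw [← Finset.map_add_right_Icc (-(N : ℤ)) N (-m), Finset.sum_map]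
      simp only [addRightEmbedding_apply, sub_eq_add_neg]
    have h5 : u N - ((2 * N + 1 : ℕ) : ℂ) * L
        = ∑ m ∈ Finset.Icc (-(N : ℤ)) N,
            ((∑ k ∈ Finset.Icc (-(N : ℤ) + -m) ((N : ℤ) + -m), a k) - L) := by
      rw [Finset.sum_sub_distrib, Finset.sum_congr rfl fun m hm => (hw m hm).symm, ← huS N,
        Finset.sum_const, hcard, nsmul_eq_mul]
    rw [h5]
    calc ‖∑ m ∈ Finset.Icc (-(N : ℤ)) N,
            ((∑ k ∈ Finset.Icc (-(N : ℤ) + -m) ((N : ℤ) + -m), a k) - L)‖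
        ≤ ∑ m ∈ Finset.Icc (-(N : ℤ)) N,
            ‖(∑ k ∈ Finset.Icc (-(N : ℤ) + -m) ((N : ℤ) + -m), a k) - L‖ :=
          norm_sum_le _ _
      _ ≤ ∑ m ∈ Finset.Icc (-(N : ℤ)) N, E (N - m.natAbs) := by
          refine Finset.sum_le_sum fun m hm => ?_
          rw [Finset.mem_Icc] at hm
          have hsub : Finset.Icc (-((N - m.natAbs : ℕ) : ℤ)) ((N - m.natAbs : ℕ) : ℤ)
              ⊆ Finset.Icc (-(N : ℤ) + -m) ((N : ℤ) + -m) := by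
            intro k hk
            rw [Finset.mem_Icc] at hk ⊢
            omega
          have h6 := hEbound _ (N - m.natAbs) hsub
          rw [← norm_neg, neg_sub]
          exact h6
      _ ≤ 2 * ∑ r ∈ Finset.range (N + 1), E r := by
          have hun : Finset.Icc (-(N : ℤ)) N
              = Finset.Icc (-(N : ℤ)) (-1) ∪ Finset.Icc 0 N := by
            ext k
            simp only [Finset.mem_Icc, Finset.mem_union]
            omega
          have hdis : Disjoint (Finset.Icc (-(N : ℤ)) (-1)) (Finset.Icc (0 : ℤ) N) := by
            rw [Finset.disjoint_left]
            intro k h1 h2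
            rw [Finset.mem_Icc] at h1 h2
            omega
          have hpos : Finset.Icc (0 : ℤ) N
              = (Finset.range (N + 1)).image (fun r : ℕ => (r : ℤ)) := by
            ext k
            simp only [Finset.mem_Icc, Finset.mem_image, Finset.mem_range]
            constructor
            · intro h
              exact ⟨k.toNat, by omega, by omega⟩
            · rintro ⟨r, hr, rfl⟩
              omega
          have hneg : Finset.Icc (-(N : ℤ)) (-1)
              = (Finset.range N).image (fun r : ℕ => -(r : ℤ) - 1) := by
            ext k
            simp only [Finset.mem_Icc, Finset.mem_image, Finset.mem_range]
            constructor
            · intro h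
              exact ⟨(-k - 1).toNat, by omega, by omega⟩
            · rintro ⟨r, hr, rfl⟩
              omega
          have e1 : ∑ m ∈ Finset.Icc (0 : ℤ) N, E (N - m.natAbs)
              = ∑ r ∈ Finset.range (N + 1), E r := by
            rw [hpos, Finset.sum_image (fun x _ y _ h => by exact_mod_cast h)]
            rw [← Finset.sum_range_reflect E (N + 1)]
            refine Finset.sum_congr rfl fun r hr => ?_
            congr 1
          have e2 : ∑ m ∈ Finset.Icc (-(N : ℤ)) (-1), E (N - m.natAbs)
              = ∑ r ∈ Finset.range N, E r := by
            rw [hneg, Finset.sum_image (fun x _ y _ h => by omega)]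
            rw [← Finset.sum_range_reflect E N]
            refine Finset.sum_congr rfl fun r hr => ?_
            congr 1
            omega
          have e3 : ∑ r ∈ Finset.range N, E r ≤ ∑ r ∈ Finset.range (N + 1), E r :=
            Finset.sum_le_sum_of_subset_of_nonneg
              (Finset.range_subset_range.mpr (by omega)) (fun r _ _ => hE0 r)
          rw [hun, Finset.sum_union hdis, e1, e2]
          linarith
  -- pass to the limit
  set v : ℕ → ℂ := fun N => u N / ((2 * N + 1 : ℕ) : ℂ) with hv
  have hvdist : ∀ N : ℕ, ‖v N - L‖ ≤ 2 * (((N + 1 : ℕ) : ℝ)⁻¹ * ∑ r ∈ Finset.range (N + 1), E r) := by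
    intro N
    have hcne : ((2 * N + 1 : ℕ) : ℂ) ≠ 0 := Nat.cast_ne_zero.mpr (by omega)
    have h6 : v N - L = (u N - ((2 * N + 1 : ℕ) : ℂ) * L) / ((2 * N + 1 : ℕ) : ℂ) := by
      rw [hv]
      field_simp
    rw [h6, norm_div]
    have h7 : ‖((2 * N + 1 : ℕ) : ℂ)‖ = ((2 * N + 1 : ℕ) : ℝ) :=
      Complex.norm_natCast _
    rw [h7]
    rw [div_le_iff₀ (by positivity)]
    have h8 : (0 : ℝ) ≤ ∑ r ∈ Finset.range (N + 1), E r :=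
      Finset.sum_nonneg fun r _ => hE0 r
    have h9 : ((N + 1 : ℕ) : ℝ) ≤ ((2 * N + 1 : ℕ) : ℝ) := by
      exact_mod_cast (by omega : N + 1 ≤ 2 * N + 1)
    calc ‖u N - ((2 * N + 1 : ℕ) : ℂ) * L‖ ≤ 2 * ∑ r ∈ Finset.range (N + 1), E r := hmain N
      _ = 2 * (((N + 1 : ℕ) : ℝ)⁻¹ * ∑ r ∈ Finset.range (N + 1), E r) * ((N + 1 : ℕ) : ℝ) := by
          field_simp
      _ ≤ 2 * (((N + 1 : ℕ) : ℝ)⁻¹ * ∑ r ∈ Finset.range (N + 1), E r) * ((2 * N + 1 : ℕ) : ℝ) := by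
          have : (0 : ℝ) ≤ 2 * (((N + 1 : ℕ) : ℝ)⁻¹ * ∑ r ∈ Finset.range (N + 1), E r) := by
            positivity
          exact mul_le_mul_of_nonneg_left h9 this
  have hc : Tendsto (fun N : ℕ => 2 * (((N + 1 : ℕ) : ℝ)⁻¹ * ∑ r ∈ Finset.range (N + 1), E r))
      atTop (𝓝 0) := by
    have h8 := hEtend.cesaro
    have h9 : Tendsto (fun N : ℕ => (((N + 1 : ℕ) : ℝ))⁻¹ * ∑ i ∈ Finset.range (N + 1), E i)
        atTop (𝓝 0) := h8.comp (tendsto_add_atTop_nat 1)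
    have := h9.const_mul (2 : ℝ)
    simpa using this
  have hnorm0 : Tendsto (fun N => ‖v N - L‖) atTop (𝓝 0) :=
    squeeze_zero (fun N => norm_nonneg _) hvdist hc
  have hvL : Tendsto v atTop (𝓝 L) := tendsto_iff_norm_sub_tendsto_zero.mpr hnorm0
  -- positivity of the averages
  have hv0 : ∀ N, 0 ≤ v N := by
    intro N
    have h := hupos N
    rw [Complex.le_def] at h
    simp only [Complex.zero_re, Complex.zero_im] at h
    have hur : u N = (((u N).re : ℝ) : ℂ) := Complex.ext rfl (by simp [← h.2])
    rw [hv]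
    simp only
    rw [hur, show ((2 * N + 1 : ℕ) : ℂ) = (((2 * N + 1 : ℕ) : ℝ) : ℂ) by push_cast; ring,
      ← Complex.ofReal_div, Complex.zero_le_real]
    exact div_nonneg h.1 (by positivity)
  have hLre : 0 ≤ L.re := by
    refine ge_of_tendsto' ((Complex.continuous_re.tendsto L).comp hvL) fun N => ?_
    have := (Complex.le_def.mp (hv0 N)).1
    simpa using this
  have hLim : L.im = 0 := by
    have h10 : Tendsto (fun N => (v N).im) atTop (𝓝 L.im) :=
      (Complex.continuous_im.tendsto L).comp hvL
    have h11 : (fun N => (v N).im) = fun _ => (0 : ℝ) := by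
      funext N
      have := (Complex.le_def.mp (hv0 N)).2
      simpa using this.symm
    rw [h11] at h10
    exact (tendsto_nhds_unique h10 tendsto_const_nhds)
  rw [Complex.le_def]
  exact ⟨by simpa using hLre, by simp [hLim]⟩
end

section
/- Let E be a complex Hilbert space, Θ a self-adjoint unitary operator on E, and K a subspace of E such that ⟪A, Θ A⟫ is a nonnegative real number for every A ∈ K. Let U be a unitary operator on E with U(K) ⊆ K and Θ ∘ U ∘ Θ = U*. Then for every A ∈ K, one has (as real numbers) Re ⟪U A, Θ(U A)⟫ ≤ Re ⟪A, Θ A⟫, and both inner products are nonnegative reals. -/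
open ContinuousLinearMap
open scoped ComplexConjugate ComplexOrder

lemma os_cauchy_schwarz
    {E : Type*} [NormedAddCommGroup E] [InnerProductSpace ℂ E] [CompleteSpace E]
    (Θ : E →L[ℂ] E) (hΘsa : IsSelfAdjoint Θ)
    (K : Submodule ℂ E)
    (hRP : ∀ A ∈ K, 0 ≤ (inner ℂ A (Θ A) : ℂ))
    {x y : E} (hx : x ∈ K) (hy : y ∈ K) :
    ‖(inner ℂ x (Θ y) : ℂ)‖ ^ 2 ≤ (inner ℂ x (Θ x) : ℂ).re * (inner ℂ y (Θ y) : ℂ).re := by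
  have hsym : ∀ u v : E, (inner ℂ u (Θ v) : ℂ) = conj (inner ℂ v (Θ u) : ℂ) := by
    intro u v
    calc (inner ℂ u (Θ v) : ℂ) = inner ℂ u (adjoint Θ v) := by rw [hΘsa.adjoint_eq]
    _ = inner ℂ (Θ u) v := adjoint_inner_right Θ u v
    _ = conj (inner ℂ v (Θ u) : ℂ) := (inner_conj_symm (Θ u) v).symm
  have ha := hRP x hx
  have hb := hRP y hy
  rw [Complex.nonneg_iff] at ha hb
  set p : ℂ := inner ℂ x (Θ y) with hp
  by_cases hp0 : p = 0
  · rw [hp0]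
    simp only [norm_zero]
    nlinarith [ha.1, hb.1]
  · have hnp : (0:ℝ) < ‖p‖ := norm_pos_iff.mpr hp0
    have hpp : conj p * p = ((‖p‖ ^ 2 : ℝ) : ℂ) := by
      rw [mul_comm, Complex.mul_conj, Complex.normSq_eq_norm_sq]
    have hquad : ∀ t : ℝ, 0 ≤ (‖p‖ ^ 2 * (inner ℂ y (Θ y) : ℂ).re) * (t * t)
        + (2 * ‖p‖ ^ 2) * t + (inner ℂ x (Θ x) : ℂ).re := by
      intro t
      set s : ℂ := (t : ℂ) * conj p with hs
      have hz : x + s • y ∈ K := K.add_mem hx (K.smul_mem _ hy)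
      have h0 := hRP _ hz
      rw [Complex.nonneg_iff] at h0
      have hexp : (inner ℂ (x + s • y) (Θ (x + s • y)) : ℂ)
          = inner ℂ x (Θ x) + s * p + conj s * conj p + conj s * s * inner ℂ y (Θ y) := by
        simp only [map_add, map_smul, inner_add_left, inner_add_right, inner_smul_left,
          inner_smul_right]
        rw [← hp, hsym y x]
        ring
      have hsp : s * p = ((t * ‖p‖ ^ 2 : ℝ) : ℂ) := by
        rw [hs, mul_assoc, hpp]; push_cast; ring
      have hcsp : conj s * conj p = ((t * ‖p‖ ^ 2 : ℝ) : ℂ) := by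
        have h := congrArg conj hsp
        rw [map_mul] at h
        rw [h, Complex.conj_ofReal]
      have hss : conj s * s = ((t * t * ‖p‖ ^ 2 : ℝ) : ℂ) := by
        rw [hs]
        simp only [map_mul, Complex.conj_conj, Complex.conj_ofReal]
        calc (t : ℂ) * p * ((t : ℂ) * conj p) = (t : ℂ) * (t : ℂ) * (conj p * p) := by ring
        _ = ((t * t * ‖p‖ ^ 2 : ℝ) : ℂ) := by rw [hpp]; push_cast; ring
      rw [hexp, hsp, hcsp, hss] at h0
      have h0re := h0.1
      simp only [Complex.add_re, Complex.ofReal_re, Complex.mul_re, Complex.ofReal_im,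
        Complex.zero_re, zero_mul, mul_zero, sub_zero, zero_sub] at h0re
      nlinarith [h0re]
    have hd := discrim_le_zero hquad
    rw [discrim] at hd
    have hps : (0:ℝ) < ‖p‖ ^ 2 := by positivity
    have hkey : ‖p‖ ^ 2 - (inner ℂ x (Θ x) : ℂ).re * (inner ℂ y (Θ y) : ℂ).re ≤ 0 := by
      by_contra hcon
      push_neg at hcon
      nlinarith [hd, hps, hcon]
    linarith

/-- **OS contraction property of time translations (Proposition IV.1).**
Let `Θ` be a self-adjoint unitary involution on a complex Hilbert space `E`
which is reflection positive on the subspace `K`, and let `U` be a unitary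
with `U K ⊆ K` and `Θ ∘ U ∘ Θ = U*`.  Then for `A ∈ K` one has
`Re ⟪U A, Θ (U A)⟫ ≤ Re ⟪A, Θ A⟫`, and both inner products are nonnegative
reals. -/
theorem os_time_translation_contraction
    {E : Type*} [NormedAddCommGroup E] [InnerProductSpace ℂ E] [CompleteSpace E]
    (Θ : E →L[ℂ] E) (hΘsa : IsSelfAdjoint Θ) (hΘinv : Θ ∘L Θ = 1)
    (K : Submodule ℂ E)
    (hRP : ∀ A ∈ K, 0 ≤ (inner ℂ A (Θ A) : ℂ))
    (U : E →L[ℂ] E)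
    (hUunit : ∀ x y, (inner ℂ (U x) (U y) : ℂ) = (inner ℂ x y : ℂ))
    (hUsurj : Function.Surjective U)
    (hUK : ∀ A ∈ K, U A ∈ K)
    (hΘU : Θ ∘L U ∘L Θ = adjoint U) :
    ∀ A ∈ K,
      ((inner ℂ (U A) (Θ (U A)) : ℂ).re ≤ ((inner ℂ A (Θ A) : ℂ)).re) ∧
      0 ≤ (inner ℂ (U A) (Θ (U A)) : ℂ) ∧
      0 ≤ (inner ℂ A (Θ A) : ℂ) := by
  intro A hA
  have hΘpt : ∀ z : E, Θ (Θ z) = z := by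
    intro z
    have := congrArg (fun T : E →L[ℂ] E => T z) hΘinv
    simpa using this
  have hUadj : ∀ z : E, adjoint U (Θ z) = Θ (U z) := by
    intro z
    rw [← hΘU]
    simp [hΘpt z]
  have hstep : ∀ x z : E, (inner ℂ (U x) (Θ (U z)) : ℂ) = inner ℂ x (Θ (U (U z))) := by
    intro x z
    rw [← (adjoint_inner_right U x (Θ (U z))), hUadj]
  set B : ℕ → E := fun n => (U ^ n) A with hB
  have hB0 : B 0 = A := by simp [hB]
  have hB1 : B 1 = U A := by simp [hB]
  have hBsucc : ∀ n, B (n + 1) = U (B n) := by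
    intro n
    show (U ^ (n + 1)) A = U ((U ^ n) A); rw [pow_succ']; rfl
  have hBK : ∀ n, B n ∈ K := by
    intro n
    induction n with
    | zero => rw [hB0]; exact hA
    | succ n ih => rw [hBsucc]; exact hUK _ ih
  set f : ℕ → ℝ := fun n => (inner ℂ (B n) (Θ (B n)) : ℂ).re with hf
  have hfpos : ∀ n, 0 ≤ f n := fun n => (Complex.nonneg_iff.mp (hRP _ (hBK n))).1
  have hshift : ∀ n m : ℕ, (inner ℂ (B n) (Θ (B (n + m))) : ℂ) = inner ℂ A (Θ (B (2 * n + m))) := by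
    intro n
    induction n with
    | zero => intro m; simp [hB0]
    | succ n ih =>
      intro m
      have e2 : B (n + 1 + m) = U (B (n + m)) := by
        rw [show n + 1 + m = (n + m) + 1 by omega, hBsucc]
      have e3 : U (U (B (n + m))) = B (n + (m + 2)) := by
        rw [show n + (m + 2) = ((n + m) + 1) + 1 by omega, hBsucc, hBsucc]
      rw [hBsucc n, e2, hstep, e3, ih (m + 2),
        show 2 * n + (m + 2) = 2 * (n + 1) + m by omega]
  have hdiag : ∀ n, (inner ℂ (B n) (Θ (B n)) : ℂ) = inner ℂ A (Θ (B (2 * n))) := by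
    intro n
    simpa using hshift n 0
  have hUnorm : ∀ z : E, ‖U z‖ = ‖z‖ := by
    intro z
    have h1 : ‖U z‖ ^ 2 = ‖z‖ ^ 2 := by
      rw [← inner_self_eq_norm_sq (𝕜 := ℂ), ← inner_self_eq_norm_sq (𝕜 := ℂ), hUunit]
    have := congrArg Real.sqrt h1
    rwa [Real.sqrt_sq (norm_nonneg _), Real.sqrt_sq (norm_nonneg _)] at this
  have hΘnorm : ∀ z : E, ‖Θ z‖ = ‖z‖ := by
    intro z
    have h0 : (inner ℂ (Θ z) (Θ z) : ℂ) = inner ℂ z z := by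
      rw [← adjoint_inner_right Θ z (Θ z), hΘsa.adjoint_eq, hΘpt]
    have h1 : ‖Θ z‖ ^ 2 = ‖z‖ ^ 2 := by
      rw [← inner_self_eq_norm_sq (𝕜 := ℂ), ← inner_self_eq_norm_sq (𝕜 := ℂ), h0]
    have := congrArg Real.sqrt h1
    rwa [Real.sqrt_sq (norm_nonneg _), Real.sqrt_sq (norm_nonneg _)] at this
  have hBnorm : ∀ n, ‖B n‖ = ‖A‖ := by
    intro n
    induction n with
    | zero => rw [hB0]
    | succ n ih => rw [hBsucc, hUnorm, ih]
  have hfM : ∀ n, f n ≤ ‖A‖ ^ 2 := by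
    intro n
    have h1 : f n ≤ ‖(inner ℂ (B n) (Θ (B n)) : ℂ)‖ := by
      exact Complex.re_le_norm _
    have h2 : ‖(inner ℂ (B n) (Θ (B n)) : ℂ)‖ ≤ ‖B n‖ * ‖Θ (B n)‖ := norm_inner_le_norm _ _
    rw [hΘnorm, hBnorm] at h2
    nlinarith
  have hf0 : f 0 = (inner ℂ A (Θ A) : ℂ).re := by rw [hf]; simp only; rw [hB0]
  have hkey : ∀ n, f n ^ 2 ≤ f 0 * f (2 * n) := by
    intro n
    have h1 : f n ≤ ‖(inner ℂ A (Θ (B (2 * n))) : ℂ)‖ := by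
      have : f n = (inner ℂ A (Θ (B (2 * n))) : ℂ).re := by
        rw [hf]; simp only; rw [hdiag n]
      rw [this]
      exact Complex.re_le_norm _
    have h2 := os_cauchy_schwarz Θ hΘsa K hRP hA (hBK (2 * n))
    rw [← hf0] at h2
    nlinarith [hfpos n, norm_nonneg (inner ℂ A (Θ (B (2 * n))) : ℂ)]
  have hpow : ∀ n : ℕ, f 1 ^ (2 ^ n) ≤ f 0 ^ (2 ^ n - 1) * f (2 ^ n) := by
    intro n
    induction n with
    | zero => simpa using le_refl (f 1)
    | succ n ih =>
      have h1 : f 1 ^ (2 ^ (n + 1)) = (f 1 ^ (2 ^ n)) ^ 2 := by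
        rw [← pow_mul, pow_succ]
      have h2 : (f 1 ^ (2 ^ n)) ^ 2 ≤ (f 0 ^ (2 ^ n - 1) * f (2 ^ n)) ^ 2 := by
        apply pow_le_pow_left₀ (pow_nonneg (hfpos 1) _) ih
      have h3 : (f 0 ^ (2 ^ n - 1) * f (2 ^ n)) ^ 2
          = f 0 ^ ((2 ^ n - 1) * 2) * f (2 ^ n) ^ 2 := by
        rw [mul_pow, ← pow_mul]
      have h4 : f (2 ^ n) ^ 2 ≤ f 0 * f (2 * 2 ^ n) := hkey (2 ^ n)
      have h5 : f 0 ^ ((2 ^ n - 1) * 2) * (f 0 * f (2 * 2 ^ n))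
          = f 0 ^ (2 ^ (n + 1) - 1) * f (2 ^ (n + 1)) := by
        have e : (2 ^ n - 1) * 2 + 1 = 2 ^ (n + 1) - 1 := by
          have := Nat.one_le_two_pow (n := n)
          omega
        rw [← mul_assoc, ← pow_succ, e, show 2 * 2 ^ n = 2 ^ (n + 1) by ring]
      calc f 1 ^ (2 ^ (n + 1)) = (f 1 ^ (2 ^ n)) ^ 2 := h1
      _ ≤ (f 0 ^ (2 ^ n - 1) * f (2 ^ n)) ^ 2 := h2
      _ = f 0 ^ ((2 ^ n - 1) * 2) * f (2 ^ n) ^ 2 := h3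
      _ ≤ f 0 ^ ((2 ^ n - 1) * 2) * (f 0 * f (2 * 2 ^ n)) := by
          apply mul_le_mul_of_nonneg_left h4 (pow_nonneg (hfpos 0) _)
      _ = f 0 ^ (2 ^ (n + 1) - 1) * f (2 ^ (n + 1)) := h5
  have hmain : f 1 ≤ f 0 := by
    by_contra hcon
    push_neg at hcon
    rcases eq_or_lt_of_le (hfpos 0) with h0 | h0
    · have h := hkey 1
      rw [← h0] at h
      nlinarith [hfpos 2]
    · have hr : 1 < f 1 / f 0 := (one_lt_div h0).mpr hcon
      obtain ⟨n, hn⟩ := pow_unbounded_of_one_lt (‖A‖ ^ 2 / f 0) hr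
      have hle : (f 1 / f 0) ^ n ≤ (f 1 / f 0) ^ (2 ^ n) :=
        pow_le_pow_right₀ hr.le (Nat.lt_two_pow_self (n := n)).le
      have hb : (f 1 / f 0) ^ (2 ^ n) ≤ ‖A‖ ^ 2 / f 0 := by
        rw [div_pow, div_le_div_iff₀ (pow_pos h0 _) h0]
        have e : f 0 ^ (2 ^ n) = f 0 ^ (2 ^ n - 1) * f 0 := by
          rw [← pow_succ, show 2 ^ n - 1 + 1 = 2 ^ n from by
            have := Nat.one_le_two_pow (n := n); omega]
        have h6 : f 1 ^ (2 ^ n) ≤ f 0 ^ (2 ^ n - 1) * ‖A‖ ^ 2 := by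
          calc f 1 ^ (2 ^ n) ≤ f 0 ^ (2 ^ n - 1) * f (2 ^ n) := hpow n
          _ ≤ f 0 ^ (2 ^ n - 1) * ‖A‖ ^ 2 :=
              mul_le_mul_of_nonneg_left (hfM _) (pow_nonneg (hfpos 0) _)
        rw [e]
        nlinarith [pow_nonneg (hfpos 0) (2 ^ n - 1), h0.le]
      linarith
  refine ⟨?_, hRP _ (hUK A hA), hRP A hA⟩
  have hf1 : f 1 = (inner ℂ (U A) (Θ (U A)) : ℂ).re := by rw [hf]; simp only; rw [hB1]
  linarith [hmain, hf0 ▸ hf1 ▸ hmain]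
end

section
/- Let H be a complex Hilbert space, J a conjugation on H, and π a self-adjoint unitary involution on H commuting with J. Let σ₊ and σ₋ be bounded linear operators on H with transposes σ±ᵀ := J ∘ σ±* ∘ J, and assume σ₊ ∘ σ₋ᵀ = σ₋ᵀ ∘ σ₊, π ∘ σ₊ᵀ ∘ π = σ₋*, and π ∘ σ₋ᵀ ∘ π = σ₊*. Set D := σ₊ ∘ σ₋ᵀ and Dᵀ := J ∘ D* ∘ J. Then π ∘ D = σ₊* ∘ π ∘ σ₊ and π ∘ Dᵀ = σ₋* ∘ π ∘ σ₋, and both π ∘ D and π ∘ Dᵀ are self-adjoint bounded operators on H. -/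
open ContinuousLinearMap
open scoped ComplexConjugate

/-- **Time reflection for the charged field (Proposition V.3).**
Let `σ₊, σ₋` be bounded operators with transposes `σ±ᵀ = J ∘ σ±* ∘ J`
satisfying `σ₊ ∘ σ₋ᵀ = σ₋ᵀ ∘ σ₊`, `π ∘ σ₊ᵀ ∘ π = σ₋*` and
`π ∘ σ₋ᵀ ∘ π = σ₊*`.  Then for `D = σ₊ ∘ σ₋ᵀ` and `Dᵀ = J ∘ D* ∘ J` one has
`π ∘ D = σ₊* ∘ π ∘ σ₊` and `π ∘ Dᵀ = σ₋* ∘ π ∘ σ₋`, and both `π ∘ D` and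
`π ∘ Dᵀ` are self-adjoint. -/
theorem charged_time_reflection_selfAdjoint
    {H : Type*} [NormedAddCommGroup H] [InnerProductSpace ℂ H] [CompleteSpace H]
    (J : H → H)
    (hJadd : ∀ x y, J (x + y) = J x + J y)
    (hJsmul : ∀ (a : ℂ) (x : H), J (a • x) = (conj a) • J x)
    (hJinv : ∀ x, J (J x) = x)
    (hJinner : ∀ x y, (inner ℂ (J x) (J y) : ℂ) = conj (inner ℂ x y : ℂ))
    (π : H →L[ℂ] H) (hπsa : IsSelfAdjoint π) (hπinv : π ∘L π = 1)
    (hπJ : ∀ x, π (J x) = J (π x))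
    (σp σm σpT σmT DT : H →L[ℂ] H)
    (hσpT : ∀ x, σpT x = J (adjoint σp (J x)))
    (hσmT : ∀ x, σmT x = J (adjoint σm (J x)))
    (hcomm : σp ∘L σmT = σmT ∘L σp)
    (hreflp : π ∘L σpT ∘L π = adjoint σm)
    (hreflm : π ∘L σmT ∘L π = adjoint σp)
    (hDT : ∀ x, DT x = J (adjoint (σp ∘L σmT) (J x))) :
    π ∘L (σp ∘L σmT) = adjoint σp ∘L (π ∘L σp) ∧
    π ∘L DT = adjoint σm ∘L (π ∘L σm) ∧
    IsSelfAdjoint (π ∘L (σp ∘L σmT)) ∧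
    IsSelfAdjoint (π ∘L DT) := by
  -- pointwise form of `π ∘L π = 1`
  have hπinv' : ∀ x, π (π x) = x := fun x => by
    have := ContinuousLinearMap.ext_iff.mp hπinv x
    simpa using this
  -- the adjoint of `σmT` is `J ∘ σm ∘ J`
  have hadjm : ∀ y, adjoint σmT y = J (σm (J y)) := by
    intro y
    refine ext_inner_left ℂ fun v => ?_
    calc (inner ℂ v (adjoint σmT y) : ℂ)
        = inner ℂ (σmT v) y := adjoint_inner_right _ _ _
      _ = inner ℂ (J (adjoint σm (J v))) (J (J y)) := by rw [hσmT, hJinv]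
      _ = conj (inner ℂ (adjoint σm (J v)) (J y)) := hJinner _ _
      _ = conj (inner ℂ (J v) (σm (J y)) : ℂ) := by rw [adjoint_inner_left]
      _ = conj (conj (inner ℂ (J (J v)) (J (σm (J y))) : ℂ)) := by rw [hJinner]; simp
      _ = inner ℂ v (J (σm (J y))) := by simp [hJinv]
  -- adjoint version of the commutation relation
  have hcomm' : ∀ x, adjoint σmT (adjoint σp x) = adjoint σp (adjoint σmT x) := by
    intro x
    have h := congrArg adjoint hcomm
    rw [adjoint_comp, adjoint_comp] at h
    exact ContinuousLinearMap.ext_iff.mp h x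
  -- `σpT` and `σm` commute
  have hcomm2 : ∀ x, σm (σpT x) = σpT (σm x) := by
    intro x
    have h1 : J (σm x) = adjoint σmT (J x) := by rw [hadjm, hJinv]
    calc σm (σpT x) = σm (J (adjoint σp (J x))) := by rw [hσpT]
      _ = J (J (σm (J (adjoint σp (J x))))) := (hJinv _).symm
      _ = J (adjoint σmT (adjoint σp (J x))) := by rw [hadjm]
      _ = J (adjoint σp (adjoint σmT (J x))) := by rw [hcomm']
      _ = J (adjoint σp (J (σm x))) := by rw [h1]
      _ = σpT (σm x) := (hσpT _).symm
  -- `DT = σm ∘L σpT`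
  have hDTeq : DT = σm ∘L σpT := by
    ext x
    calc DT x = J (adjoint (σp ∘L σmT) (J x)) := hDT x
      _ = J (adjoint σmT (adjoint σp (J x))) := by rw [adjoint_comp]; rfl
      _ = J (J (σm (J (adjoint σp (J x))))) := by rw [hadjm]
      _ = σm (J (adjoint σp (J x))) := hJinv _
      _ = σm (σpT x) := by rw [hσpT]
  -- pointwise consequences of the reflection relations
  have h1 : ∀ x, adjoint σp (π x) = π (σmT x) := by
    intro x
    have := ContinuousLinearMap.ext_iff.mp hreflm (π x)
    simp only [ContinuousLinearMap.comp_apply] at this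
    rw [← this, hπinv']
  have h2 : ∀ x, adjoint σm (π x) = π (σpT x) := by
    intro x
    have := ContinuousLinearMap.ext_iff.mp hreflp (π x)
    simp only [ContinuousLinearMap.comp_apply] at this
    rw [← this, hπinv']
  have hcommpt : ∀ x, σp (σmT x) = σmT (σp x) :=
    fun x => ContinuousLinearMap.ext_iff.mp hcomm x
  -- first identity
  have g1 : π ∘L (σp ∘L σmT) = adjoint σp ∘L (π ∘L σp) := by
    ext x
    simp only [ContinuousLinearMap.comp_apply]
    rw [h1, hcommpt]
  -- second identity
  have g2 : π ∘L DT = adjoint σm ∘L (π ∘L σm) := by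
    ext x
    simp only [hDTeq, ContinuousLinearMap.comp_apply]
    rw [h2, hcomm2]
  have hπadj : adjoint π = π := by
    rw [← ContinuousLinearMap.star_eq_adjoint]; exact hπsa.star_eq
  have sa : ∀ A : H →L[ℂ] H, IsSelfAdjoint (adjoint A ∘L (π ∘L A)) := by
    intro A
    rw [ContinuousLinearMap.isSelfAdjoint_iff']
    rw [adjoint_comp, adjoint_comp, adjoint_adjoint, hπadj,
      ContinuousLinearMap.comp_assoc]
  refine ⟨g1, g2, ?_, ?_⟩
  · rw [g1]; exact sa σp
  · rw [g2]; exact sa σm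
end
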